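/- arXiv:1908.11632 — 5 statements merged into one kernel-verified Lean document; each statement's English description precedes it below -/
import Mathlib

section
/- Let M be an n×n (0,1)-matrix, d ≥ 1, ε > 0, and let S = {S₁,...,S_d} be any skeleton for M (built by repeatedly adding influential entries starting from d empty sets, with threshold g(ε,d)=ε/(4d)). Then |S_i| ≤ 8d/ε for every i ∈ [d]. -/
/-- Zeros of row `x`. -/
def Zrow {n : ℕ} (M : Matrix (Fin n) (Fin n) Bool) (x : Fin n) : Set (Fin n) :=
  {y | M x y = false}

/-- Zeros of column `y`. -/
def Zcol {n : ℕ} (M : Matrix (Fin n) (Fin n) Bool) (y : Fin n) : Set (Fin n) :=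
  {x | M x y = false}

/-- Zeros of a set of rows. -/
def ZrowSet {n : ℕ} (M : Matrix (Fin n) (Fin n) Bool) (X : Set (Fin n)) : Set (Fin n) :=
  ⋃ x ∈ X, Zrow M x

/-- Zeros of a set of columns. -/
def ZcolSet {n : ℕ} (M : Matrix (Fin n) (Fin n) Bool) (Y : Set (Fin n)) : Set (Fin n) :=
  ⋃ y ∈ Y, Zcol M y

/-- Row indices of a set of entries. -/
def RS {n : ℕ} (S : Set (Fin n × Fin n)) : Set (Fin n) := Prod.fst '' S

/-- Column indices of a set of entries. -/
def CS {n : ℕ} (S : Set (Fin n × Fin n)) : Set (Fin n) := Prod.snd '' S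

/-- Entry `p` is compatible with the set `S` of 1-entries. -/
def Compatible {n : ℕ} (M : Matrix (Fin n) (Fin n) Bool)
    (S : Set (Fin n × Fin n)) (p : Fin n × Fin n) : Prop :=
  ∀ e ∈ S, M p.1 e.2 = true ∧ M e.1 p.2 = true

/-- Row `x` is zero-heavy with respect to `S` (threshold `g(ε,d) = ε/(4d)`). -/
def RowZeroHeavy {n : ℕ} (M : Matrix (Fin n) (Fin n) Bool) (ε : ℝ) (d : ℕ)
    (S : Set (Fin n × Fin n)) (x : Fin n) : Prop :=
  (ε / (4 * d)) * n ≤ ((Zrow M x \ ZrowSet M (RS S)).ncard : ℝ)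

/-- Column `y` is zero-heavy with respect to `S`. -/
def ColZeroHeavy {n : ℕ} (M : Matrix (Fin n) (Fin n) Bool) (ε : ℝ) (d : ℕ)
    (S : Set (Fin n × Fin n)) (y : Fin n) : Prop :=
  (ε / (4 * d)) * n ≤ ((Zcol M y \ ZcolSet M (CS S)).ncard : ℝ)

/-- Entry `p` is influential with respect to `S`. -/
def Influential {n : ℕ} (M : Matrix (Fin n) (Fin n) Bool) (ε : ℝ) (d : ℕ)
    (S : Set (Fin n × Fin n)) (p : Fin n × Fin n) : Prop :=
  M p.1 p.2 = true ∧ Compatible M S p ∧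
    (RowZeroHeavy M ε d S p.1 ∨ ColZeroHeavy M ε d S p.2)

/-- Skeletons: `d`-tuples of sets of 1-entries built inductively from the empty
tuple by adding influential entries. -/
inductive IsSkeleton {n : ℕ} (M : Matrix (Fin n) (Fin n) Bool) (ε : ℝ) (d : ℕ) :
    (Fin d → Set (Fin n × Fin n)) → Prop
  | empty : IsSkeleton M ε d (fun _ => ∅)
  | add (S : Fin d → Set (Fin n × Fin n)) (i : Fin d) (p : Fin n × Fin n) :
      IsSkeleton M ε d S → Influential M ε d (S i) p →
      IsSkeleton M ε d (Function.update S i (S i ∪ {p}))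

/-- A 1-entry `p` is beneficial for the skeleton `S` if for every `i` it is
incompatible with `S i` or influential with respect to `S i`. -/
def Beneficial {n : ℕ} (M : Matrix (Fin n) (Fin n) Bool) (ε : ℝ) (d : ℕ)
    (S : Fin d → Set (Fin n × Fin n)) (p : Fin n × Fin n) : Prop :=
  M p.1 p.2 = true ∧
    ∀ i, ¬ Compatible M (S i) p ∨ Influential M ε d (S i) p

lemma ZrowSet_union_single {n : ℕ} (M : Matrix (Fin n) (Fin n) Bool)
    (S : Set (Fin n × Fin n)) (p : Fin n × Fin n) :
    ZrowSet M (RS (S ∪ {p})) = ZrowSet M (RS S) ∪ Zrow M p.1 := by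
  ext z
  simp only [ZrowSet, RS, Set.image_union, Set.image_singleton, Set.mem_union,
    Set.mem_iUnion, Set.mem_singleton_iff, Set.mem_image, Prod.exists]
  aesop

lemma ZcolSet_union_single {n : ℕ} (M : Matrix (Fin n) (Fin n) Bool)
    (S : Set (Fin n × Fin n)) (p : Fin n × Fin n) :
    ZcolSet M (CS (S ∪ {p})) = ZcolSet M (CS S) ∪ Zcol M p.2 := by
  ext z
  simp only [ZcolSet, CS, Set.image_union, Set.image_singleton, Set.mem_union,
    Set.mem_iUnion, Set.mem_singleton_iff, Set.mem_image, Prod.exists]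
  aesop

lemma ncard_union_ge {n : ℕ} (A B : Set (Fin n)) :
    ((A ∪ B).ncard : ℝ) = A.ncard + (B \ A).ncard := by
  have : A ∪ B = A ∪ (B \ A) := by
    ext x; simp only [Set.mem_union, Set.mem_diff]; tauto
  rw [this, Set.ncard_union_eq (Set.disjoint_sdiff_right) (Set.toFinite _) (Set.toFinite _)]
  push_cast; ring

lemma ncard_le_n {n : ℕ} (A : Set (Fin n)) : (A.ncard : ℝ) ≤ n := by
  have h := Set.ncard_le_ncard (Set.subset_univ A) Set.finite_univ
  have : (Set.univ : Set (Fin n)).ncard = n := by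
    simp [Set.ncard_univ]
  exact_mod_cast this ▸ h

lemma skeleton_invariant {n : ℕ} (M : Matrix (Fin n) (Fin n) Bool)
    (ε : ℝ) (hε : 0 < ε) (d : ℕ)
    (S : Fin d → Set (Fin n × Fin n)) (hS : IsSkeleton M ε d S) :
    ∀ i, ((S i).ncard : ℝ) * ((ε / (4 * d)) * n) ≤
      ((ZrowSet M (RS (S i))).ncard : ℝ) + ((ZcolSet M (CS (S i))).ncard : ℝ) := by
  induction hS with
  | empty =>
      intro i
      simp [RS, CS, ZrowSet, ZcolSet]
  | add S i p hsk hinf ih =>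
      intro j
      by_cases hji : j = i
      · subst hji
        simp only [Function.update_self]
        by_cases hp : p ∈ S j
        · have : S j ∪ {p} = S j := by
            simp [Set.union_singleton, Set.insert_eq_self.mpr hp]
          rw [this]; exact ih j
        · have hcard : ((S j ∪ {p}).ncard : ℝ) = (S j).ncard + 1 := by
            rw [Set.union_singleton, Set.ncard_insert_of_notMem hp (Set.toFinite _)]
            push_cast; ring
          rw [hcard]
          have hrow_mono : ((ZrowSet M (RS (S j))).ncard : ℝ)
              ≤ ((ZrowSet M (RS (S j ∪ {p}))).ncard : ℝ) := by
            rw [ZrowSet_union_single, ncard_union_ge]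
            have : (0:ℝ) ≤ ((Zrow M p.1 \ ZrowSet M (RS (S j))).ncard : ℝ) := by positivity
            linarith
          have hcol_mono : ((ZcolSet M (CS (S j))).ncard : ℝ)
              ≤ ((ZcolSet M (CS (S j ∪ {p}))).ncard : ℝ) := by
            rw [ZcolSet_union_single, ncard_union_ge]
            have : (0:ℝ) ≤ ((Zcol M p.2 \ ZcolSet M (CS (S j))).ncard : ℝ) := by positivity
            linarith
          rcases hinf.2.2 with hrow | hcol
          · have hr : ((ZrowSet M (RS (S j))).ncard : ℝ) + (ε / (4 * d)) * n
                ≤ ((ZrowSet M (RS (S j ∪ {p}))).ncard : ℝ) := by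
              rw [ZrowSet_union_single, ncard_union_ge]
              have := hrow
              unfold RowZeroHeavy at this
              linarith
            have := ih j
            nlinarith [hr, hcol_mono]
          · have hc : ((ZcolSet M (CS (S j))).ncard : ℝ) + (ε / (4 * d)) * n
                ≤ ((ZcolSet M (CS (S j ∪ {p}))).ncard : ℝ) := by
              rw [ZcolSet_union_single, ncard_union_ge]
              have := hcol
              unfold ColZeroHeavy at this
              linarith
            have := ih j
            nlinarith [hc, hrow_mono]
      · simp only [Function.update_of_ne hji]
        exact ih j

theorem skeleton_component_size {n : ℕ} (M : Matrix (Fin n) (Fin n) Bool)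
    (ε : ℝ) (hε : 0 < ε) (d : ℕ) (hd : 1 ≤ d)
    (S : Fin d → Set (Fin n × Fin n)) (hS : IsSkeleton M ε d S) :
    ∀ i, ((S i).ncard : ℝ) ≤ 8 * d / ε := by
  intro i
  rcases Nat.eq_zero_or_pos n with hn | hn
  · subst hn
    -- Fin 0 is empty, so S i has no elements
    have : S i = ∅ := Set.eq_empty_of_forall_notMem (fun p _ => p.1.elim0)
    rw [this]
    simp only [Set.ncard_empty, Nat.cast_zero]
    positivity
  · have hinv := skeleton_invariant M ε hε d S hS i
    have hr := ncard_le_n (ZrowSet M (RS (S i)))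
    have hc := ncard_le_n (ZcolSet M (CS (S i)))
    have hdpos : (0:ℝ) < d := by exact_mod_cast Nat.lt_of_lt_of_le Nat.zero_lt_one hd
    have hnpos : (0:ℝ) < n := by exact_mod_cast hn
    have hkey : ((S i).ncard : ℝ) * ((ε / (4 * d)) * n) ≤ 2 * n := by linarith
    have e : ((S i).ncard : ℝ) * ((ε / (4 * d)) * n) = ((S i).ncard * ε * n) / (4 * d) := by
      ring
    rw [e, div_le_iff₀ (by positivity)] at hkey
    rw [le_div_iff₀ hε]
    nlinarith [hkey, hnpos]
end

section
/- Let M be an n×n (0,1)-matrix, 0<ε≤1, d≥1, and let S = {S₁,...,S_d} be a skeleton for M having at most (ε²/64)·n² beneficial entries. Then M is ε-close to Boolean rank at most d: there exists a (0,1)-matrix M' differing from M in at most ε·n² entries with Boolean rank at most d. -/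
/-- Boolean rank at most `d`: cover of the 1-entries by `d` all-ones rectangles. -/
def BoolRankLE {n : ℕ} (d : ℕ) (M : Matrix (Fin n) (Fin n) Bool) : Prop :=
  ∃ (R : Fin d → Set (Fin n)) (C : Fin d → Set (Fin n)),
    (∀ i, ∀ x ∈ R i, ∀ y ∈ C i, M x y = true) ∧
    (∀ x y, M x y = true → ∃ i, x ∈ R i ∧ y ∈ C i)

theorem few_beneficial_implies_close {n : ℕ} (M : Matrix (Fin n) (Fin n) Bool)
    (ε : ℝ) (hε0 : 0 < ε) (hε1 : ε ≤ 1) (d : ℕ) (hd : 1 ≤ d)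
    (S : Fin d → Set (Fin n × Fin n)) (hS : IsSkeleton M ε d S)
    (hfew : (({p | Beneficial M ε d S p} : Set (Fin n × Fin n)).ncard : ℝ)
              ≤ ε ^ 2 / 64 * n ^ 2) :
    ∃ M' : Matrix (Fin n) (Fin n) Bool,
      (({p : Fin n × Fin n | M' p.1 p.2 ≠ M p.1 p.2}).ncard : ℝ) ≤ ε * n ^ 2 ∧
      BoolRankLE d M' := by
  classical
  set R : Fin d → Set (Fin n) := fun i =>
    {x | (∀ e ∈ S i, M x e.2 = true) ∧ ¬ RowZeroHeavy M ε d (S i) x} with hRdef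
  set C : Fin d → Set (Fin n) := fun i =>
    {y | (∀ e ∈ S i, M e.1 y = true) ∧ ¬ ColZeroHeavy M ε d (S i) y} with hCdef
  set M' : Matrix (Fin n) (Fin n) Bool := fun x y =>
    decide (∃ i, x ∈ R i ∧ y ∈ C i) with hM'def
  have hM'iff : ∀ x y, M' x y = true ↔ ∃ i, x ∈ R i ∧ y ∈ C i := by
    intro x y; simp [hM'def]
  refine ⟨M', ?_, R, C, ?_, ?_⟩
  · -- the counting part
    -- Finset versions
    set Dfin : Finset (Fin n × Fin n) :=
      Finset.univ.filter (fun p => M' p.1 p.2 ≠ M p.1 p.2) with hDdef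
    set Benfin : Finset (Fin n × Fin n) :=
      Finset.univ.filter (fun p => Beneficial M ε d S p) with hBen
    set F : Fin d → Finset (Fin n × Fin n) := fun i =>
      Finset.univ.filter (fun p => p.1 ∈ R i ∧ p.2 ∈ C i ∧ M p.1 p.2 = false) with hF
    have hDset : ({p : Fin n × Fin n | M' p.1 p.2 ≠ M p.1 p.2}).ncard = Dfin.card := by
      rw [hDdef]
      rw [← Set.ncard_coe_finset]
      congr 1
      ext p; simp
    have hBenset : ({p | Beneficial M ε d S p} : Set (Fin n × Fin n)).ncard = Benfin.card := by
      rw [hBen, ← Set.ncard_coe_finset]; congr 1; ext p; simp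
    -- D ⊆ Ben ∪ ⋃ F i
    have hsub : Dfin ⊆ Benfin ∪ Finset.univ.biUnion F := by
      intro p hp
      simp only [hDdef, Finset.mem_filter, Finset.mem_univ, true_and] at hp
      rcases hb : M p.1 p.2 with _ | _
      · -- M p = false, M' p = true
        have hM'p : M' p.1 p.2 = true := by
          cases h' : M' p.1 p.2
          · exact absurd (h'.trans hb.symm) hp
          · rfl
        obtain ⟨i, hx, hy⟩ := (hM'iff p.1 p.2).1 hM'p
        apply Finset.mem_union_right
        refine Finset.mem_biUnion.2 ⟨i, Finset.mem_univ i, ?_⟩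
        simp [hF, hx, hy, hb]
      · -- M p = true, M' p = false: beneficial
        have hM'p : M' p.1 p.2 = false := by
          cases h' : M' p.1 p.2
          · rfl
          · exact absurd (h'.trans hb.symm) hp
        have hnex : ¬ ∃ i, p.1 ∈ R i ∧ p.2 ∈ C i := by
          rw [← hM'iff p.1 p.2, hM'p]; simp
        apply Finset.mem_union_left
        simp only [hBen, Finset.mem_filter, Finset.mem_univ, true_and]
        refine ⟨hb, fun i => ?_⟩
        by_cases hcomp : Compatible M (S i) p
        · right
          refine ⟨hb, hcomp, ?_⟩
          have hrc : ∀ e ∈ S i, M p.1 e.2 = true := fun e he => (hcomp e he).1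
          have hcc : ∀ e ∈ S i, M e.1 p.2 = true := fun e he => (hcomp e he).2
          have : ¬ (p.1 ∈ R i ∧ p.2 ∈ C i) := fun h => hnex ⟨i, h⟩
          by_cases hrz : RowZeroHeavy M ε d (S i) p.1
          · exact Or.inl hrz
          · right
            by_contra hcz
            exact this ⟨⟨hrc, hrz⟩, ⟨hcc, hcz⟩⟩
        · exact Or.inl hcomp
    -- bound card of each F i
    have hn0 : (0:ℝ) ≤ ε / (4 * d) * n := by
      have : (0:ℝ) < (d:ℝ) := by exact_mod_cast hd
      positivity
    have hFbound : ∀ i, ((F i).card : ℝ) ≤ n * (ε / (4 * d) * n) := by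
      intro i
      have hfib : (F i).card = ∑ x : Fin n,
          ((F i).filter (fun p => p.1 = x)).card :=
        Finset.card_eq_sum_card_fiberwise (fun p _ => Finset.mem_univ p.1)
      have hfibb : ∀ x : Fin n,
          (((F i).filter (fun p => p.1 = x)).card : ℝ) ≤ ε / (4 * d) * n := by
        intro x
        by_cases hx : x ∈ R i
        · -- fiber injects into Zrow M x \ ZrowSet M (RS (S i))
          have hxh := hx
          rw [hRdef] at hxh
          obtain ⟨-, hnotheavy⟩ := hxh
          have hlt : ((Zrow M x \ ZrowSet M (RS (S i))).ncard : ℝ) < ε / (4 * d) * n := by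
            by_contra h
            exact hnotheavy (le_of_not_gt h)
          refine le_trans ?_ (le_of_lt hlt)
          have hinj : (((F i).filter (fun p => p.1 = x)).image Prod.snd).card
              = ((F i).filter (fun p => p.1 = x)).card := by
            apply Finset.card_image_of_injOn
            intro p hp q hq hpq
            have hp' := (Finset.mem_filter.1 hp).2
            have hq' := (Finset.mem_filter.1 hq).2
            exact Prod.ext (hp'.trans hq'.symm) hpq
          rw [← hinj]
          have hfin : (Zrow M x \ ZrowSet M (RS (S i))).Finite := Set.toFinite _
          rw [Set.ncard_eq_toFinset_card _ hfin]
          have hsubf : (((F i).filter (fun p => p.1 = x)).image Prod.snd) ⊆ hfin.toFinset := by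
            intro y hy
            simp only [Finset.mem_image, Finset.mem_filter] at hy
            obtain ⟨p, ⟨hpF, hp1⟩, hp2⟩ := hy
            simp only [hF, Finset.mem_filter, Finset.mem_univ, true_and] at hpF
            obtain ⟨hpR, hpC, hp0⟩ := hpF
            rw [Set.Finite.mem_toFinset]
            constructor
            · show M x y = false
              rw [← hp1, ← hp2]; exact hp0
            · intro hyZ
              rw [ZrowSet, Set.mem_iUnion] at hyZ
              obtain ⟨x', hx'⟩ := hyZ
              rw [Set.mem_iUnion] at hx'
              obtain ⟨hx'RS, hyZx'⟩ := hx'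
              obtain ⟨e, heS, he1⟩ := hx'RS
              have hC2 := hpC
              rw [hCdef] at hC2
              have := hC2.1 e heS
              rw [he1, hp2] at this
              have hfal : M x' y = false := hyZx'
              rw [this] at hfal
              simp at hfal
          exact_mod_cast Finset.card_le_card hsubf
        · -- fiber is empty
          have : ((F i).filter (fun p => p.1 = x)) = ∅ := by
            apply Finset.filter_eq_empty_iff.2
            intro p hp hp1
            simp only [hF, Finset.mem_filter, Finset.mem_univ, true_and] at hp
            exact hx (hp1 ▸ hp.1)
          rw [this]; simpa using hn0
      calc ((F i).card : ℝ) = ∑ x : Fin n,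
            (((F i).filter (fun p => p.1 = x)).card : ℝ) := by
              rw [hfib]; push_cast; ring
        _ ≤ ∑ _x : Fin n, (ε / (4 * d) * n) := Finset.sum_le_sum (fun x _ => hfibb x)
        _ = n * (ε / (4 * d) * n) := by rw [Finset.sum_const]; simp [mul_comm]
    -- put together
    have hcard : (Dfin.card : ℝ) ≤ (Benfin.card : ℝ) + d * (n * (ε / (4 * d) * n)) := by
      have h1 : Dfin.card ≤ Benfin.card + (Finset.univ.biUnion F).card :=
        le_trans (Finset.card_le_card hsub) (Finset.card_union_le _ _)
      have h2 : (Finset.univ.biUnion F).card ≤ ∑ i : Fin d, (F i).card :=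
        Finset.card_biUnion_le
      have h3 : ((Finset.univ.biUnion F).card : ℝ) ≤ d * (n * (ε / (4 * d) * n)) := by
        calc ((Finset.univ.biUnion F).card : ℝ) ≤ ∑ i : Fin d, ((F i).card : ℝ) := by
              exact_mod_cast h2
          _ ≤ ∑ _i : Fin d, (n * (ε / (4 * d) * n)) := Finset.sum_le_sum (fun i _ => hFbound i)
          _ = d * (n * (ε / (4 * d) * n)) := by rw [Finset.sum_const]; simp [mul_comm]
      calc (Dfin.card : ℝ) ≤ (Benfin.card : ℝ) + ((Finset.univ.biUnion F).card : ℝ) := by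
            exact_mod_cast h1
        _ ≤ _ := by linarith
    rw [hDset]
    have hdpos : (0:ℝ) < (d:ℝ) := by exact_mod_cast hd
    have heq : (d:ℝ) * (n * (ε / (4 * d) * n)) = ε / 4 * n ^ 2 := by
      field_simp
    rw [hBenset] at hfew
    have hε2 : ε ^ 2 / 64 * n ^ 2 ≤ ε / 64 * n ^ 2 := by
      have : ε ^ 2 ≤ ε := by nlinarith
      have hn2 : (0:ℝ) ≤ (n:ℝ) ^ 2 := by positivity
      nlinarith
    have hn2 : (0:ℝ) ≤ (n:ℝ) ^ 2 := by positivity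
    calc (Dfin.card : ℝ) ≤ (Benfin.card : ℝ) + d * (n * (ε / (4 * d) * n)) := hcard
      _ = (Benfin.card : ℝ) + ε / 4 * n ^ 2 := by rw [heq]
      _ ≤ ε ^ 2 / 64 * n ^ 2 + ε / 4 * n ^ 2 := by linarith
      _ ≤ ε * n ^ 2 := by nlinarith
  · intro i x hx y hy
    exact (hM'iff x y).2 ⟨i, hx, hy⟩
  · intro x y hxy
    exact (hM'iff x y).1 hxy
end

section
/- Let M be an n×n (0,1)-matrix that is ε-far from binary rank at most d, and let W be a t×t submatrix of M induced by rows x₁,...,x_t and columns y₁,...,y_t with binary rank at most d. Then at least one of the following holds: (1) more than (ε/3)n row indices of [n] are new with respect to W; (2) more than (ε/3)n column indices of [n] are new with respect to W; (3) more than (ε/3)n² entries (x,y)∈[n]×[n] are new corner entries with respect to W. -/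
/-- Binary rank at most `d`: the 1-entries can be partitioned into `d`
pairwise-disjoint monochromatic (all-ones) rectangles. -/
def BinRankLE {a b : ℕ} (d : ℕ) (M : Matrix (Fin a) (Fin b) Bool) : Prop :=
  ∃ (R : Fin d → Set (Fin a)) (C : Fin d → Set (Fin b)),
    (∀ i, ∀ x ∈ R i, ∀ y ∈ C i, M x y = true) ∧
    (∀ x y, M x y = true → ∃ i, x ∈ R i ∧ y ∈ C i) ∧
    (∀ i j x y, i ≠ j → x ∈ R i → y ∈ C i → ¬(x ∈ R j ∧ y ∈ C j))

/-- Row index `a` is new with respect to the submatrix of `M` induced by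
rows `x₁,…,x_t` and columns `y₁,…,y_t`. -/
def NewRow {n t : ℕ} (M : Matrix (Fin n) (Fin n) Bool)
    (x y : Fin t → Fin n) (a : Fin n) : Prop :=
  ∀ i : Fin t, ∃ j : Fin t, M a (y j) ≠ M (x i) (y j)

/-- Column index `b` is new with respect to the submatrix of `M` induced by
rows `x₁,…,x_t` and columns `y₁,…,y_t`. -/
def NewCol {n t : ℕ} (M : Matrix (Fin n) (Fin n) Bool)
    (x y : Fin t → Fin n) (b : Fin n) : Prop :=
  ∀ j : Fin t, ∃ i : Fin t, M (x i) b ≠ M (x i) (y j)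

/-- Entry `(a,b)` is a new corner entry with respect to the submatrix of `M`
induced by rows `x₁,…,x_t` and columns `y₁,…,y_t`. -/
def NewCorner {n t : ℕ} (M : Matrix (Fin n) (Fin n) Bool)
    (x y : Fin t → Fin n) (a b : Fin n) : Prop :=
  ¬ NewRow M x y a ∧ ¬ NewCol M x y b ∧
  ∃ i j : Fin t,
    (∀ k, M a (y k) = M (x i) (y k)) ∧
    (∀ k, M (x k) b = M (x k) (y j)) ∧
    M a b ≠ M (x i) (y j)

/-- `M` is `ε`-far from binary rank at most `d`. -/
def EpsFarBinRank {n : ℕ} (ε : ℝ) (d : ℕ) (M : Matrix (Fin n) (Fin n) Bool) : Prop :=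
  ∀ M' : Matrix (Fin n) (Fin n) Bool, BinRankLE d M' →
    ε * n ^ 2 < (({p : Fin n × Fin n | M' p.1 p.2 ≠ M p.1 p.2}).ncard : ℝ)

lemma my_ncard_prod {α β : Type*} (s : Set α) (t : Set β) :
    (s ×ˢ t).ncard = s.ncard * t.ncard := by
  rw [← Nat.card_coe_set_eq, ← Nat.card_coe_set_eq, ← Nat.card_coe_set_eq,
    ← Nat.card_prod, Nat.card_congr (Equiv.Set.prod s t)]

theorem far_implies_many_new {n t : ℕ} (M : Matrix (Fin n) (Fin n) Bool)
    (ε : ℝ) (d : ℕ) (hfar : EpsFarBinRank ε d M)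
    (x y : Fin t → Fin n)
    (hW : BinRankLE d (M.submatrix x y)) :
    (ε / 3) * n < (({a | NewRow M x y a} : Set (Fin n)).ncard : ℝ) ∨
    (ε / 3) * n < (({b | NewCol M x y b} : Set (Fin n)).ncard : ℝ) ∨
    (ε / 3) * n ^ 2 <
      (({p : Fin n × Fin n | NewCorner M x y p.1 p.2}).ncard : ℝ) := by
  classical
  by_contra hcon
  push_neg at hcon
  obtain ⟨h1, h2, h3⟩ := hcon
  have hrow : ∀ a, ¬ NewRow M x y a → ∃ i : Fin t, ∀ j, M a (y j) = M (x i) (y j) := by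
    intro a ha
    unfold NewRow at ha
    push_neg at ha
    simpa using ha
  have hcol : ∀ b, ¬ NewCol M x y b → ∃ j : Fin t, ∀ i, M (x i) b = M (x i) (y j) := by
    intro b hb
    unfold NewCol at hb
    push_neg at hb
    simpa using hb
  set M' : Matrix (Fin n) (Fin n) Bool := fun a b =>
    if ha : NewRow M x y a then false
    else if hb : NewCol M x y b then false
    else M (x (hrow a ha).choose) (y (hcol b hb).choose) with hM'
  obtain ⟨R, C, hmono, hcover, hdisj⟩ := hW
  have hrank : BinRankLE d M' := by
    refine ⟨fun k => {a | ∃ ha : ¬ NewRow M x y a, (hrow a ha).choose ∈ R k},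
      fun k => {b | ∃ hb : ¬ NewCol M x y b, (hcol b hb).choose ∈ C k}, ?_, ?_, ?_⟩
    · rintro k a ⟨ha, hia⟩ b ⟨hb, hjb⟩
      simp only [hM', dif_neg ha, dif_neg hb]
      exact hmono k _ hia _ hjb
    · intro a b hab
      simp only [hM'] at hab
      by_cases ha : NewRow M x y a
      · simp [dif_pos ha] at hab
      by_cases hb : NewCol M x y b
      · simp [dif_neg ha, dif_pos hb] at hab
      rw [dif_neg ha, dif_neg hb] at hab
      obtain ⟨k, hk1, hk2⟩ := hcover _ _ hab
      exact ⟨k, ⟨ha, hk1⟩, ⟨hb, hk2⟩⟩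
    · rintro k l a b hkl ⟨ha, hia⟩ ⟨hb, hjb⟩ ⟨⟨ha', hia'⟩, ⟨hb', hjb'⟩⟩
      exact hdisj k l _ _ hkl hia hjb ⟨hia', hjb'⟩
  have hbig := hfar M' hrank
  set D := {p : Fin n × Fin n | M' p.1 p.2 ≠ M p.1 p.2} with hD
  set A := ({a | NewRow M x y a} : Set (Fin n)) ×ˢ (Set.univ : Set (Fin n)) with hA
  set B := (Set.univ : Set (Fin n)) ×ˢ ({b | NewCol M x y b} : Set (Fin n)) with hB
  set Cs := {p : Fin n × Fin n | NewCorner M x y p.1 p.2} with hCs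
  have hsub : D ⊆ A ∪ B ∪ Cs := by
    rintro ⟨a, b⟩ hab
    simp only [hD, Set.mem_setOf_eq, hM'] at hab
    by_cases ha : NewRow M x y a
    · left; left; exact ⟨ha, Set.mem_univ _⟩
    by_cases hb : NewCol M x y b
    · left; right; exact ⟨Set.mem_univ _, hb⟩
    right
    rw [dif_neg ha, dif_neg hb] at hab
    exact ⟨ha, hb, (hrow a ha).choose, (hcol b hb).choose,
      (hrow a ha).choose_spec, (hcol b hb).choose_spec, fun h => hab h.symm⟩
  have hcard : (D.ncard : ℝ) ≤ (A.ncard : ℝ) + (B.ncard : ℝ) + (Cs.ncard : ℝ) := by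
    have u1 : D.ncard ≤ (A ∪ B ∪ Cs).ncard :=
      Set.ncard_le_ncard hsub (Set.toFinite _)
    have u2 : (A ∪ B ∪ Cs).ncard ≤ (A ∪ B).ncard + Cs.ncard := Set.ncard_union_le _ _
    have u3 : (A ∪ B).ncard ≤ A.ncard + B.ncard := Set.ncard_union_le _ _
    have : D.ncard ≤ A.ncard + B.ncard + Cs.ncard := by omega
    exact_mod_cast this
  have hAcard : (A.ncard : ℝ) = (({a | NewRow M x y a} : Set (Fin n)).ncard : ℝ) * n := by
    rw [hA, my_ncard_prod, Set.ncard_univ]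
    push_cast [Nat.card_eq_fintype_card, Fintype.card_fin]
    ring
  have hBcard : (B.ncard : ℝ) = (n : ℝ) * (({b | NewCol M x y b} : Set (Fin n)).ncard : ℝ) := by
    rw [hB, my_ncard_prod, Set.ncard_univ]
    push_cast [Nat.card_eq_fintype_card, Fintype.card_fin]
    ring
  have hn : (0 : ℝ) ≤ n := Nat.cast_nonneg n
  have : (D.ncard : ℝ) ≤ ε * n ^ 2 := by
    rw [hAcard, hBcard] at hcard
    nlinarith [hcard, h1, h2, h3]
  linarith [hbig]
end

section
/- Let W be a t×t submatrix of an n×n (0,1)-matrix M induced by rows x₁,...,x_t and columns y₁,...,y_t, and suppose W has binary rank at most d. Suppose further that no row index of [n] is new w.r.t. W, no column index of [n] is new w.r.t. W, and no entry of M is a new corner entry w.r.t. W. Then M itself has binary rank at most d. -/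
theorem no_new_implies_binRank {n t : ℕ} (M : Matrix (Fin n) (Fin n) Bool)
    (d : ℕ) (x y : Fin t → Fin n)
    (hW : BinRankLE d (M.submatrix x y))
    (hrow : ∀ a : Fin n, ¬ NewRow M x y a)
    (hcol : ∀ b : Fin n, ¬ NewCol M x y b)
    (hcorner : ∀ a b : Fin n, ¬ NewCorner M x y a b) :
    BinRankLE d M := by
  -- Choose for each row a an index i(a) whose W-row matches, similarly columns.
  have hr : ∀ a : Fin n, ∃ i : Fin t, ∀ j, M a (y j) = M (x i) (y j) := by
    intro a
    have := hrow a
    unfold NewRow at this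
    push_neg at this
    exact this
  have hc : ∀ b : Fin n, ∃ j : Fin t, ∀ i, M (x i) b = M (x i) (y j) := by
    intro b
    have := hcol b
    unfold NewCol at this
    push_neg at this
    exact this
  choose ri hri using hr
  choose cj hcj using hc
  have key : ∀ a b, M a b = M (x (ri a)) (y (cj b)) := by
    intro a b
    by_contra h
    exact hcorner a b ⟨hrow a, hcol b, ri a, cj b, hri a, hcj b, h⟩
  obtain ⟨R, C, hmono, hcov, hdisj⟩ := hW
  refine ⟨fun k => {a | ri a ∈ R k}, fun k => {b | cj b ∈ C k}, ?_, ?_, ?_⟩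
  · intro k a ha b hb
    rw [key a b]
    exact hmono k _ ha _ hb
  · intro a b hab
    rw [key a b] at hab
    obtain ⟨k, h1, h2⟩ := hcov _ _ hab
    exact ⟨k, h1, h2⟩
  · intro i j a b hij ha hb ⟨ha', hb'⟩
    exact hdisj i j (ri a) (cj b) hij ha hb ⟨ha', hb'⟩
end

section
/- Let W be a t×t (0,1)-submatrix of M of binary rank at most d, induced by rows x₁,...,x_t and columns y₁,...,y_t. If (x,y) is a new corner entry with respect to W, then the (t+1)×(t+1) submatrix W' induced by x₁,...,x_t,x and y₁,...,y_t,y has strictly more distinct rows than W and strictly more distinct columns than W. -/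
/-- The number of distinct rows of a matrix. -/
def numDistinctRows {a b : ℕ} (M : Matrix (Fin a) (Fin b) Bool) : ℕ :=
  (Finset.univ.image fun i => M i).card

/-- The number of distinct columns of a matrix. -/
def numDistinctCols {a b : ℕ} (M : Matrix (Fin a) (Fin b) Bool) : ℕ :=
  (Finset.univ.image fun j => fun i => M i j).card

theorem newCorner_increases_distinct {n t : ℕ} (M : Matrix (Fin n) (Fin n) Bool)
    (d : ℕ) (x y : Fin t → Fin n)
    (hW : BinRankLE d (M.submatrix x y))
    (a b : Fin n) (hab : NewCorner M x y a b) :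
    numDistinctRows (M.submatrix x y) <
      numDistinctRows (M.submatrix (Fin.snoc x a) (Fin.snoc y b)) ∧
    numDistinctCols (M.submatrix x y) <
      numDistinctCols (M.submatrix (Fin.snoc x a) (Fin.snoc y b)) := by

  obtain ⟨-, -, i, j, hrow, hcol, hne⟩ := hab
  set W' := M.submatrix (Fin.snoc x a) (Fin.snoc y b) with hW'
  have key : ∀ (S : Finset (Fin t → Bool)) (S' : Finset (Fin (t+1) → Bool))
      (g : (Fin (t+1) → Bool) → (Fin t → Bool)) (u v : Fin (t+1) → Bool),
      S = S'.image g → u ∈ S' → v ∈ S' → g u = g v → u ≠ v → S.card < S'.card := by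
    intro S S' g u v hS hu hv hgu huv
    rw [hS]
    refine lt_of_le_of_ne Finset.card_image_le (fun h => ?_)
    exact huv (Finset.card_image_iff.mp h hu hv hgu)
  constructor
  · apply key _ _ (fun r => r ∘ Fin.castSucc) (W' (Fin.castSucc i)) (W' (Fin.last t))
    · ext r
      simp only [Finset.mem_image, Finset.mem_univ, true_and]
      constructor
      · rintro ⟨k, rfl⟩
        refine ⟨W' (Fin.castSucc k), ⟨Fin.castSucc k, rfl⟩, ?_⟩
        funext m
        simp [hW', Matrix.submatrix_apply]
      · rintro ⟨r', ⟨k, rfl⟩, rfl⟩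
        induction k using Fin.lastCases with
        | last =>
          refine ⟨i, ?_⟩
          funext m
          simp [hW', Matrix.submatrix_apply, hrow m]
        | cast k =>
          refine ⟨k, ?_⟩
          funext m
          simp [hW', Matrix.submatrix_apply]
    · exact Finset.mem_image_of_mem _ (Finset.mem_univ _)
    · exact Finset.mem_image_of_mem _ (Finset.mem_univ _)
    · funext m
      simp [hW', Matrix.submatrix_apply, (hrow m).symm]
    · intro h
      apply hne
      have := congrFun h (Fin.last t)
      simp only [hW', Matrix.submatrix_apply, Fin.snoc_castSucc, Fin.snoc_last] at this
      rw [← this, hcol i]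
  · apply key _ _ (fun r => r ∘ Fin.castSucc)
      (fun i' => W' i' (Fin.castSucc j)) (fun i' => W' i' (Fin.last t))
    · ext r
      simp only [Finset.mem_image, Finset.mem_univ, true_and]
      constructor
      · rintro ⟨k, rfl⟩
        refine ⟨fun i' => W' i' (Fin.castSucc k), ⟨Fin.castSucc k, rfl⟩, ?_⟩
        funext m
        simp [hW', Matrix.submatrix_apply]
      · rintro ⟨r', ⟨k, rfl⟩, rfl⟩
        induction k using Fin.lastCases with
        | last =>
          refine ⟨j, ?_⟩
          funext m
          simp [hW', Matrix.submatrix_apply, hcol m]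
        | cast k =>
          refine ⟨k, ?_⟩
          funext m
          simp [hW', Matrix.submatrix_apply]
    · exact Finset.mem_image_of_mem _ (Finset.mem_univ _)
    · exact Finset.mem_image_of_mem _ (Finset.mem_univ _)
    · funext m
      simp [hW', Matrix.submatrix_apply, (hcol m).symm]
    · intro h
      apply hne
      have := congrFun h (Fin.last t)
      simp only [hW', Matrix.submatrix_apply, Fin.snoc_castSucc, Fin.snoc_last] at this
      rw [← this, hrow j]
end
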